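/- arXiv:1707.08666 — 4 statements merged into one kernel-verified Lean document; each statement's English description precedes it below -/
import Mathlib

section
/- Let k ∈ ℝ and let F : (0,∞) → ℝ be continuously differentiable with lim_{L→0⁺} L²F(L) = 0. If for every Lₘ > 0, ∫₀^{Lₘ} L³F(L)/√(Lₘ²−L²) dL = 2k ∫₀^{Lₘ} L F(L) √(Lₘ²−L²) dL, then F satisfies L F′(L) = 2(k−1)F(L) for all L > 0, hence F(L) = C·L^{2(k−1)} for some constant C. -/
/-
Multiply the identity at `Lₘ = r` by `r / √(t² - r²)` and integrate over `r ∈ (0, t)`. After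
exchanging the order of integration, the inner integrals are
`∫_L^t r dr / (√(t² - r²) √(r² - L²)) = π / 2` and
`∫_L^t r √(r² - L²) dr / √(t² - r²) = π (t² - L²) / 4`
(both via `r² = L² cos² θ + t² sin² θ`), so the identity becomes the moment relation
`(1 + k) ∫₀^t L³ F = k t² ∫₀^t L F`. Differentiating it in `t` gives `t² F(t) = 2 k ∫₀^t L F`,
and differentiating once more gives `t F' = 2 (k - 1) F`, whose solutions are `C t^(2(k-1))`.
-/

open MeasureTheory Set Real Filter Topology

lemma integrableOn_Ioo_zero_of_integrableAtFilter {f : ℝ → ℝ} (hf : ContinuousOn f (Ioi 0))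
    (h : IntegrableAtFilter f (𝓝[>] 0)) (t : ℝ) : IntegrableOn f (Ioo 0 t) := by
  obtain ⟨s, hs, hfs⟩ := h
  obtain ⟨δ, hδ, hδs⟩ := mem_nhdsGT_iff_exists_Ioo_subset.1 hs
  have hIcc : IntegrableOn f (Icc δ t) :=
    (hf.mono fun x hx => lt_of_lt_of_le (mem_Ioi.1 hδ) hx.1).integrableOn_Icc
  refine ((hfs.mono_set hδs).union hIcc).mono_set fun x hx => ?_
  rcases lt_or_ge x δ with hxδ | hxδ
  exacts [Or.inl ⟨hx.1, hxδ⟩, Or.inr ⟨hxδ, hx.2.le⟩]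

lemma integrableOn_Ioo_zero_of_tendsto {f : ℝ → ℝ} {c : ℝ} (hf : ContinuousOn f (Ioi 0))
    (h : Tendsto f (𝓝[>] 0) (𝓝 c)) (t : ℝ) : IntegrableOn f (Ioo 0 t) :=
  integrableOn_Ioo_zero_of_integrableAtFilter hf
    (h.integrableAtFilter (hf.stronglyMeasurableAtFilter_nhdsWithin measurableSet_Ioi 0)
      (volume.finiteAt_nhdsWithin 0 _)) t

lemma integrableAtFilter_of_integrableOn_mul_sqrt {f : ℝ → ℝ} {r : ℝ} (hr : 0 < r)
    (h : IntegrableOn (fun L => f L * √(r ^ 2 - L ^ 2)) (Ioo 0 r)) :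
    IntegrableAtFilter f (𝓝[>] 0) := by
  refine ⟨Ioo 0 (r / 2), Ioo_mem_nhdsGT (by positivity), ?_⟩
  have hsub : ∀ L ∈ Icc 0 (r / 2), 0 < r ^ 2 - L ^ 2 := fun L hL => by
    nlinarith [hL.1, hL.2]
  have hinv : ContinuousOn (fun L => (√(r ^ 2 - L ^ 2))⁻¹) (Icc 0 (r / 2)) :=
    ContinuousOn.inv₀ (by fun_prop) fun L hL => (sqrt_pos.2 (hsub L hL)).ne'
  refine ((h.mono_set (Ioo_subset_Ioo_right (by linarith))).mul_continuousOn_of_subset hinv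
    measurableSet_Ioo isCompact_Icc Ioo_subset_Icc_self).congr_fun (fun L hL => ?_)
    measurableSet_Ioo
  have := (sqrt_pos.2 (hsub L (Ioo_subset_Icc_self hL))).ne'
  field_simp

lemma hasDerivAt_integral_Ioo_zero {g : ℝ → ℝ} {t : ℝ} (hg : ContinuousOn g (Ioi 0))
    (hgi : IntegrableOn g (Ioo 0 t)) (ht : 0 < t) :
    HasDerivAt (fun u => ∫ x in Ioo 0 u, g x) (g t) t := by
  have hint : IntervalIntegrable g volume 0 t :=
    (intervalIntegrable_iff_integrableOn_Ioo_of_le ht.le).2 hgi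
  refine (intervalIntegral.integral_hasDerivAt_right hint
    (hg.stronglyMeasurableAtFilter isOpen_Ioi t ht) (hg.continuousAt (Ioi_mem_nhds ht))
    ).congr_of_eventuallyEq ?_
  filter_upwards [Ioi_mem_nhds ht] with u hu
  rw [intervalIntegral.integral_of_le (le_of_lt hu), integral_Ioc_eq_integral_Ioo]

lemma eq_of_hasDerivAt_of_eqOn_Ioi {f g : ℝ → ℝ} {a b x : ℝ} (hfg : EqOn f g (Ioi 0))
    (hx : 0 < x) (hf : HasDerivAt f a x) (hg : HasDerivAt g b x) : a = b :=
  hf.unique <| hg.congr_of_eventuallyEq <| eventually_of_mem (Ioi_mem_nhds hx) hfg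

lemma eqOn_zero_of_integral_Ioo_zero_eq_zero {g : ℝ → ℝ} (hg : ContinuousOn g (Ioi 0))
    (hgi : ∀ t, IntegrableOn g (Ioo 0 t)) (h : ∀ t, 0 < t → ∫ x in Ioo 0 t, g x = 0) :
    EqOn g 0 (Ioi 0) := fun t ht =>
  eq_of_hasDerivAt_of_eqOn_Ioi h ht
    (hasDerivAt_integral_Ioo_zero hg (hgi t) ht) (hasDerivAt_const t 0)

lemma eq_mul_rpow_of_mul_deriv_eq {f : ℝ → ℝ} {a : ℝ} (hf : DifferentiableOn ℝ f (Ioi 0))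
    (h : ∀ x, 0 < x → x * deriv f x = a * f x) {x : ℝ} (hx : 0 < x) :
    f x = f 1 * x ^ a := by
  have hderiv : ∀ y, 0 < y → HasDerivAt (fun y => f y * y ^ (-a)) 0 y := by
    intro y hy
    have hfy := (hf.differentiableAt (Ioi_mem_nhds hy)).hasDerivAt
    refine (hfy.mul (hasDerivAt_rpow_const (p := -a) (Or.inl hy.ne'))).congr_deriv ?_
    rw [rpow_sub hy, rpow_one]
    field_simp
    linear_combination y ^ (-a) * h y hy
  have hconst := isOpen_Ioi.is_const_of_deriv_eq_zero isPreconnected_Ioi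
    (fun y hy => (hderiv y hy).differentiableAt.differentiableWithinAt)
    (fun y hy => (hderiv y hy).deriv) (mem_Ioi.2 hx) (mem_Ioi.2 one_pos)
  rw [one_rpow, mul_one] at hconst
  rw [← hconst, mul_assoc, ← rpow_add hx, neg_add_cancel, rpow_zero, mul_one]

noncomputable def abelKernel (t L r : ℝ) : ℝ := r / (√(t ^ 2 - r ^ 2) * √(r ^ 2 - L ^ 2))

-- Under `r = abelParam L t θ`, i.e. `r² = L² cos² θ + t² sin² θ`, the measure
-- `abelKernel t L r dr` on `(L, t)` becomes `dθ` on `(0, π / 2)`.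
noncomputable def abelParam (L t θ : ℝ) : ℝ := √(L ^ 2 + (t ^ 2 - L ^ 2) * sin θ ^ 2)

section AbelKernel

variable {L t : ℝ}

lemma abelParam_sq (hL : 0 ≤ L) (hLt : L ≤ t) (θ : ℝ) :
    abelParam L t θ ^ 2 = L ^ 2 + (t ^ 2 - L ^ 2) * sin θ ^ 2 := by
  have : 0 ≤ t ^ 2 - L ^ 2 := by nlinarith
  exact sq_sqrt (by positivity)

lemma abelParam_pos (hL : 0 ≤ L) (hLt : L < t) {θ : ℝ} (hθ : θ ∈ Ioo 0 (π / 2)) :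
    0 < abelParam L t θ := by
  have := sin_pos_of_mem_Ioo ⟨hθ.1, by linarith [hθ.2, pi_pos]⟩
  have hd : 0 < t ^ 2 - L ^ 2 := by nlinarith
  exact sqrt_pos.2 (by positivity)

lemma hasDerivAt_abelParam (hL : 0 ≤ L) (hLt : L < t) {θ : ℝ} (hθ : θ ∈ Ioo 0 (π / 2)) :
    HasDerivAt (abelParam L t)
      ((t ^ 2 - L ^ 2) * sin θ * cos θ / abelParam L t θ) θ := by
  have hinner : HasDerivAt (fun θ => L ^ 2 + (t ^ 2 - L ^ 2) * sin θ ^ 2)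
      ((t ^ 2 - L ^ 2) * (2 * sin θ * cos θ)) θ := by
    simpa using (((hasDerivAt_sin θ).pow 2).const_mul (t ^ 2 - L ^ 2)).const_add (L ^ 2)
  have hpos : L ^ 2 + (t ^ 2 - L ^ 2) * sin θ ^ 2 ≠ 0 := by
    rw [← abelParam_sq hL hLt.le]; exact (pow_pos (abelParam_pos hL hLt hθ) 2).ne'
  refine (hinner.sqrt hpos).congr_deriv ?_
  unfold abelParam
  ring

lemma strictMonoOn_abelParam (hL : 0 ≤ L) (hLt : L < t) :
    StrictMonoOn (abelParam L t) (Ioo 0 (π / 2)) := by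
  intro a ha b hb hab
  have hIcc : ∀ x ∈ Ioo 0 (π / 2), x ∈ Icc (-(π / 2)) (π / 2) :=
    fun x hx => ⟨by linarith [hx.1, pi_pos], hx.2.le⟩
  have hsin := strictMonoOn_sin (hIcc a ha) (hIcc b hb) hab
  have hsa := sin_pos_of_mem_Ioo ⟨ha.1, by linarith [ha.2, pi_pos]⟩
  have hd : 0 < t ^ 2 - L ^ 2 := by nlinarith
  exact sqrt_lt_sqrt (by positivity) (by gcongr)

lemma image_abelParam (hL : 0 ≤ L) (hLt : L < t) :
    abelParam L t '' Ioo 0 (π / 2) = Ioo L t := by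
  have hd : 0 < t ^ 2 - L ^ 2 := by nlinarith
  ext r
  constructor
  · rintro ⟨θ, hθ, rfl⟩
    have hφ := abelParam_pos hL hLt hθ
    have hsq := abelParam_sq hL hLt.le θ
    have hs := sin_pos_of_mem_Ioo ⟨hθ.1, by linarith [hθ.2, pi_pos]⟩
    have hs1 : sin θ < 1 := by
      rw [← sin_pi_div_two]
      exact strictMonoOn_sin ⟨by linarith [hθ.1, pi_pos], hθ.2.le⟩
        ⟨by linarith [pi_pos], le_rfl⟩ hθ.2
    constructor
    · nlinarith [mul_pos hd (pow_pos hs 2)]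
    · nlinarith [mul_lt_mul_of_pos_left (pow_lt_one₀ hs.le hs1 two_ne_zero) hd]
  · rintro ⟨hLr, hrt⟩
    set y := √((r ^ 2 - L ^ 2) / (t ^ 2 - L ^ 2))
    have hy0 : 0 < y := sqrt_pos.2 (div_pos (by nlinarith) hd)
    have hy1 : y < 1 := (sqrt_lt' one_pos).2 (by rw [one_pow, div_lt_one hd]; nlinarith)
    refine ⟨arcsin y, ⟨arcsin_pos.2 hy0, arcsin_lt_pi_div_two.2 hy1⟩, ?_⟩
    rw [abelParam, sin_arcsin (by linarith) hy1.le, sq_sqrt (div_pos (by nlinarith) hd).le,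
      mul_div_cancel₀ _ hd.ne', add_sub_cancel, sqrt_sq (by linarith)]

lemma abs_deriv_abelParam_mul_abelKernel (hL : 0 ≤ L) (hLt : L < t) {θ : ℝ}
    (hθ : θ ∈ Ioo 0 (π / 2)) :
    |(t ^ 2 - L ^ 2) * sin θ * cos θ / abelParam L t θ| * abelKernel t L (abelParam L t θ)
      = 1 := by
  have hd : 0 < t ^ 2 - L ^ 2 := by nlinarith
  have hφ := abelParam_pos hL hLt hθ
  have hs := sin_pos_of_mem_Ioo ⟨hθ.1, by linarith [hθ.2, pi_pos]⟩
  have hc := cos_pos_of_mem_Ioo ⟨by linarith [hθ.1, pi_pos], hθ.2⟩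
  have hsq := abelParam_sq hL hLt.le θ
  have hcos : t ^ 2 - abelParam L t θ ^ 2 = (t ^ 2 - L ^ 2) * cos θ ^ 2 := by
    rw [hsq]; linear_combination -(t ^ 2 - L ^ 2) * sin_sq_add_cos_sq θ
  have hsin : abelParam L t θ ^ 2 - L ^ 2 = (t ^ 2 - L ^ 2) * sin θ ^ 2 := by
    rw [hsq]; ring
  rw [abelKernel, hcos, hsin, sqrt_mul hd.le, sqrt_mul hd.le, sqrt_sq hc.le, sqrt_sq hs.le,
    abs_of_pos (by positivity)]
  have := sq_sqrt hd.le
  field_simp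
  linarith

lemma abelParam_substitution (hL : 0 ≤ L) (hLt : L < t) (g : ℝ → ℝ) :
    EqOn (fun θ => |(t ^ 2 - L ^ 2) * sin θ * cos θ / abelParam L t θ| •
        (abelKernel t L (abelParam L t θ) * g (abelParam L t θ ^ 2)))
      (fun θ => g (L ^ 2 + (t ^ 2 - L ^ 2) * sin θ ^ 2)) (Ioo 0 (π / 2)) := by
  intro θ hθ
  simp only [smul_eq_mul, ← mul_assoc, abs_deriv_abelParam_mul_abelKernel hL hLt hθ, one_mul,
    abelParam_sq hL hLt.le]

lemma integrableOn_abelKernel_mul_iff (hL : 0 ≤ L) (hLt : L < t) (g : ℝ → ℝ) :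
    IntegrableOn (fun r => abelKernel t L r * g (r ^ 2)) (Ioo L t) ↔
      IntegrableOn (fun θ => g (L ^ 2 + (t ^ 2 - L ^ 2) * sin θ ^ 2)) (Ioo 0 (π / 2)) := by
  rw [← image_abelParam hL hLt, integrableOn_image_iff_integrableOn_abs_deriv_smul
    measurableSet_Ioo (fun θ hθ => (hasDerivAt_abelParam hL hLt hθ).hasDerivWithinAt)
    (strictMonoOn_abelParam hL hLt).injOn]
  exact integrableOn_congr_fun (abelParam_substitution hL hLt g) measurableSet_Ioo

lemma integral_abelKernel_mul (hL : 0 ≤ L) (hLt : L < t) (g : ℝ → ℝ) :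
    ∫ r in Ioo L t, abelKernel t L r * g (r ^ 2) =
      ∫ θ in Ioo 0 (π / 2), g (L ^ 2 + (t ^ 2 - L ^ 2) * sin θ ^ 2) := by
  rw [← image_abelParam hL hLt, integral_image_eq_integral_abs_deriv_smul
    measurableSet_Ioo (fun θ hθ => (hasDerivAt_abelParam hL hLt hθ).hasDerivWithinAt)
    (strictMonoOn_abelParam hL hLt).injOn]
  exact setIntegral_congr_fun measurableSet_Ioo (abelParam_substitution hL hLt g)

lemma integrableOn_abelKernel (hL : 0 ≤ L) (hLt : L < t) :
    IntegrableOn (abelKernel t L) (Ioo L t) := by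
  simpa using (integrableOn_abelKernel_mul_iff hL hLt fun _ => 1).2
    (integrableOn_const measure_Ioo_lt_top.ne)

lemma integral_abelKernel (hL : 0 ≤ L) (hLt : L < t) :
    ∫ r in Ioo L t, abelKernel t L r = π / 2 := by
  simpa [(div_pos pi_pos two_pos).le] using integral_abelKernel_mul hL hLt fun _ => 1

lemma integrableOn_abelKernel_mul_sq_sub (hL : 0 ≤ L) (hLt : L < t) :
    IntegrableOn (fun r => abelKernel t L r * (r ^ 2 - L ^ 2)) (Ioo L t) :=
  (integrableOn_abelKernel_mul_iff hL hLt fun s => s - L ^ 2).2 <|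
    (Continuous.integrableOn_Icc (by fun_prop)).mono_set Ioo_subset_Icc_self

lemma integral_abelKernel_mul_sq_sub (hL : 0 ≤ L) (hLt : L < t) :
    ∫ r in Ioo L t, abelKernel t L r * (r ^ 2 - L ^ 2) = π / 4 * (t ^ 2 - L ^ 2) := by
  rw [integral_abelKernel_mul hL hLt fun s => s - L ^ 2, ← integral_Ioc_eq_integral_Ioo,
    ← intervalIntegral.integral_of_le (by positivity)]
  simp only [add_sub_cancel_left, intervalIntegral.integral_const_mul, integral_sin_sq, sin_zero,
    cos_zero, mul_one, sin_pi_div_two, cos_pi_div_two, mul_zero, sub_self, zero_add, sub_zero]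
  ring

lemma abelKernel_mul_sq_sub (t L r : ℝ) :
    abelKernel t L r * (r ^ 2 - L ^ 2) = r / √(t ^ 2 - r ^ 2) * √(r ^ 2 - L ^ 2) := by
  rcases le_or_gt (r ^ 2 - L ^ 2) 0 with h | h
  · simp [abelKernel, sqrt_eq_zero'.2 h]
  · have hsq := sq_sqrt h.le
    have := sqrt_pos.2 h
    unfold abelKernel
    field_simp
    rw [hsq]

end AbelKernel

lemma restrict_Ioo_restrict_Ioi (μ : Measure ℝ) {a t L : ℝ} (hL : a ≤ L) :
    (μ.restrict (Ioo a t)).restrict (Ioi L) = μ.restrict (Ioo L t) := by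
  rw [Measure.restrict_restrict measurableSet_Ioi]
  congr 1
  ext r
  simp only [mem_inter_iff, mem_Ioi, mem_Ioo]
  grind

lemma restrict_Ioo_restrict_Iio (μ : Measure ℝ) {a t r : ℝ} (hr : r ≤ t) :
    (μ.restrict (Ioo a t)).restrict (Iio r) = μ.restrict (Ioo a r) := by
  rw [Measure.restrict_restrict measurableSet_Iio, Iio_inter_Ioo, min_eq_left hr]

section TriangleFubini

variable {a t : ℝ} {ψ I : ℝ → ℝ} {κ : ℝ → ℝ → ℝ}

lemma indicator_lt_section_fst (L : ℝ) :
    (fun r => {q : ℝ × ℝ | q.1 < q.2}.indicator (fun q => ψ q.1 * κ q.1 q.2) (L, r)) =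
      (Ioi L).indicator fun r => ψ L * κ L r := by
  ext r; simp [indicator_apply]

lemma indicator_lt_section_snd (r : ℝ) :
    (fun L => {q : ℝ × ℝ | q.1 < q.2}.indicator (fun q => ψ q.1 * κ q.1 q.2) (L, r)) =
      (Iio r).indicator fun L => ψ L * κ L r := by
  ext L; simp [indicator_apply]

lemma integrable_indicator_lt_prod (hψ : AEStronglyMeasurable ψ (volume.restrict (Ioo a t)))
    (hκ : Measurable (Function.uncurry κ))
    (hκ_nonneg : ∀ L ∈ Ioo a t, ∀ r ∈ Ioo L t, 0 ≤ κ L r)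
    (hκ_int : ∀ L ∈ Ioo a t, IntegrableOn (κ L) (Ioo L t))
    (hI : ∀ L ∈ Ioo a t, ∫ r in Ioo L t, κ L r = I L)
    (hψI : IntegrableOn (fun L => ψ L * I L) (Ioo a t)) :
    Integrable ({q : ℝ × ℝ | q.1 < q.2}.indicator fun q => ψ q.1 * κ q.1 q.2)
      ((volume.restrict (Ioo a t)).prod (volume.restrict (Ioo a t))) := by
  have hmeas : AEStronglyMeasurable ({q : ℝ × ℝ | q.1 < q.2}.indicator
      fun q => ψ q.1 * κ q.1 q.2) ((volume.restrict (Ioo a t)).prod (volume.restrict (Ioo a t))) :=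
    (hψ.comp_fst.mul hκ.aestronglyMeasurable).indicator
      (measurableSet_lt measurable_fst measurable_snd)
  refine (integrable_prod_iff hmeas).2 ⟨?_, hψI.norm.congr ?_⟩
  all_goals filter_upwards [ae_restrict_mem measurableSet_Ioo] with L hL
  · rw [indicator_lt_section_fst, integrable_indicator_iff measurableSet_Ioi, IntegrableOn,
      restrict_Ioo_restrict_Ioi _ hL.1.le]
    exact (hκ_int L hL).const_mul (ψ L)
  have hI_nonneg : 0 ≤ I L := hI L hL ▸ setIntegral_nonneg measurableSet_Ioo (hκ_nonneg L hL)
  symm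
  calc ∫ r, ‖{q : ℝ × ℝ | q.1 < q.2}.indicator (fun q => ψ q.1 * κ q.1 q.2) (L, r)‖
          ∂volume.restrict (Ioo a t)
      = ∫ r, (Ioi L).indicator (fun r => ‖ψ L * κ L r‖) r ∂volume.restrict (Ioo a t) := by
        congr 1; ext r
        rw [← norm_indicator_eq_indicator_norm, ← indicator_lt_section_fst]
    _ = ∫ r in Ioo L t, ‖ψ L * κ L r‖ := by
        rw [integral_indicator measurableSet_Ioi, restrict_Ioo_restrict_Ioi _ hL.1.le]
    _ = ∫ r in Ioo L t, |ψ L| * κ L r := by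
        refine setIntegral_congr_fun measurableSet_Ioo fun r hr => ?_
        rw [norm_mul, Real.norm_eq_abs, norm_of_nonneg (hκ_nonneg L hL r hr)]
    _ = ‖ψ L * I L‖ := by
        rw [integral_const_mul, hI L hL, norm_mul, norm_of_nonneg hI_nonneg, Real.norm_eq_abs]

theorem integral_Ioo_integral_Ioo_swap (hψ : AEStronglyMeasurable ψ (volume.restrict (Ioo a t)))
    (hκ : Measurable (Function.uncurry κ))
    (hκ_nonneg : ∀ L ∈ Ioo a t, ∀ r ∈ Ioo L t, 0 ≤ κ L r)
    (hκ_int : ∀ L ∈ Ioo a t, IntegrableOn (κ L) (Ioo L t))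
    (hI : ∀ L ∈ Ioo a t, ∫ r in Ioo L t, κ L r = I L)
    (hψI : IntegrableOn (fun L => ψ L * I L) (Ioo a t)) :
    ∫ r in Ioo a t, ∫ L in Ioo a r, ψ L * κ L r = ∫ L in Ioo a t, ψ L * I L := by
  set Φ : ℝ × ℝ → ℝ := {q | q.1 < q.2}.indicator fun q => ψ q.1 * κ q.1 q.2
  calc ∫ r in Ioo a t, ∫ L in Ioo a r, ψ L * κ L r
      = ∫ r in Ioo a t, ∫ L in Ioo a t, Φ (L, r) := by
        refine setIntegral_congr_fun measurableSet_Ioo fun r hr => ?_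
        rw [indicator_lt_section_snd, integral_indicator measurableSet_Iio,
          restrict_Ioo_restrict_Iio _ hr.2.le]
    _ = ∫ L in Ioo a t, ∫ r in Ioo a t, Φ (L, r) :=
        (integral_integral_swap (f := fun L r => Φ (L, r))
          (integrable_indicator_lt_prod hψ hκ hκ_nonneg hκ_int hI hψI)).symm
    _ = ∫ L in Ioo a t, ψ L * I L := by
        refine setIntegral_congr_fun measurableSet_Ioo fun L hL => ?_
        rw [indicator_lt_section_fst, integral_indicator measurableSet_Ioi,
          restrict_Ioo_restrict_Ioi _ hL.1.le, integral_const_mul, hI L hL]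

end TriangleFubini

lemma integral_mul_integral_div_sqrt {t : ℝ} {ψ : ℝ → ℝ} (hψ : IntegrableOn ψ (Ioo 0 t)) :
    ∫ r in Ioo 0 t, r / √(t ^ 2 - r ^ 2) * ∫ L in Ioo 0 r, ψ L / √(r ^ 2 - L ^ 2) =
      π / 2 * ∫ L in Ioo 0 t, ψ L := by
  calc ∫ r in Ioo 0 t, r / √(t ^ 2 - r ^ 2) * ∫ L in Ioo 0 r, ψ L / √(r ^ 2 - L ^ 2)
      = ∫ r in Ioo 0 t, ∫ L in Ioo 0 r, ψ L * abelKernel t L r := by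
        congr 1; ext r
        rw [← integral_const_mul]
        congr 1; ext L
        unfold abelKernel
        ring
    _ = ∫ L in Ioo 0 t, ψ L * (π / 2) := by
        refine integral_Ioo_integral_Ioo_swap hψ.aestronglyMeasurable
          (by unfold abelKernel; fun_prop) (fun L hL r hr => ?_)
          (fun L hL => integrableOn_abelKernel hL.1.le hL.2)
          (fun L hL => integral_abelKernel hL.1.le hL.2) (hψ.mul_const _)
        unfold abelKernel
        have := hL.1.trans hr.1
        positivity
    _ = π / 2 * ∫ L in Ioo 0 t, ψ L := by rw [integral_mul_const, mul_comm]

lemma integral_mul_integral_mul_sqrt {t : ℝ} {ψ : ℝ → ℝ} (hψ : IntegrableOn ψ (Ioo 0 t)) :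
    ∫ r in Ioo 0 t, r / √(t ^ 2 - r ^ 2) * ∫ L in Ioo 0 r, ψ L * √(r ^ 2 - L ^ 2) =
      π / 4 * ∫ L in Ioo 0 t, ψ L * (t ^ 2 - L ^ 2) := by
  calc ∫ r in Ioo 0 t, r / √(t ^ 2 - r ^ 2) * ∫ L in Ioo 0 r, ψ L * √(r ^ 2 - L ^ 2)
      = ∫ r in Ioo 0 t, ∫ L in Ioo 0 r, ψ L * (abelKernel t L r * (r ^ 2 - L ^ 2)) := by
        congr 1; ext r
        rw [← integral_const_mul]
        congr 1; ext L
        rw [abelKernel_mul_sq_sub]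
        ring
    _ = ∫ L in Ioo 0 t, ψ L * (π / 4 * (t ^ 2 - L ^ 2)) := by
        refine integral_Ioo_integral_Ioo_swap hψ.aestronglyMeasurable
          (by unfold abelKernel; fun_prop) (fun L hL r hr => ?_)
          (fun L hL => integrableOn_abelKernel_mul_sq_sub hL.1.le hL.2)
          (fun L hL => integral_abelKernel_mul_sq_sub hL.1.le hL.2)
          (hψ.mul_continuousOn_of_subset (by fun_prop) measurableSet_Ioo isCompact_Icc
            Ioo_subset_Icc_self)
        rw [abelKernel_mul_sq_sub]
        have := hL.1.trans hr.1
        positivity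
    _ = π / 4 * ∫ L in Ioo 0 t, ψ L * (t ^ 2 - L ^ 2) := by
        rw [← integral_const_mul]
        congr 1; ext L
        ring

/-- The hypothesis `P_θ = k P_r`, as an identity between moments of `F` at every `Lₘ = r`. -/
def AnisotropyIdentity (k : ℝ) (F : ℝ → ℝ) : Prop :=
  ∀ r, 0 < r → ∫ L in Ioo 0 r, L ^ 3 * F L / √(r ^ 2 - L ^ 2) =
    2 * k * ∫ L in Ioo 0 r, L * F L * √(r ^ 2 - L ^ 2)

namespace AnisotropyIdentity

variable {k : ℝ} {F : ℝ → ℝ}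

lemma integrableOn_id_mul (hint : AnisotropyIdentity k F) (hF : ContinuousOn F (Ioi 0))
    (hP : ∀ t, IntegrableOn (fun L => L ^ 3 * F L) (Ioo 0 t)) (t : ℝ) :
    IntegrableOn (fun L => L * F L) (Ioo 0 t) := by
  -- Otherwise the right-hand sides of `hint` are junk zeros, which forces `F = 0`.
  by_contra hQ
  have hQ' : ¬ IntegrableAtFilter (fun L => L * F L) (𝓝[>] 0) := fun h =>
    hQ (integrableOn_Ioo_zero_of_integrableAtFilter (by fun_prop) h t)
  have hA : ∀ r, 0 < r → ∫ L in Ioo 0 r, L ^ 3 * F L / √(r ^ 2 - L ^ 2) = 0 := fun r hr => by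
    rw [hint r hr, integral_undef fun h => hQ' (integrableAtFilter_of_integrableOn_mul_sqrt hr h),
      mul_zero]
  have hP0 : ∀ t, 0 < t → ∫ L in Ioo 0 t, L ^ 3 * F L = 0 := fun t ht => by
    have h := integral_mul_integral_div_sqrt (hP t)
    rw [setIntegral_congr_fun measurableSet_Ioo (g := fun _ => 0)
      (fun r hr => by simp only [hA r hr.1, mul_zero]), integral_zero] at h
    exact (mul_eq_zero.1 h.symm).resolve_left (by positivity)
  have hF0 := eqOn_zero_of_integral_Ioo_zero_eq_zero (by fun_prop) hP hP0
  refine hQ (integrableOn_zero.congr_fun (fun L hL => ?_) measurableSet_Ioo)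
  have hF0L : F L = 0 :=
    (mul_eq_zero.1 (hF0 hL.1)).resolve_left (pow_pos hL.1 3).ne'
  simp [hF0L]

lemma moment_eq (hint : AnisotropyIdentity k F)
    (hP : ∀ t, IntegrableOn (fun L => L ^ 3 * F L) (Ioo 0 t))
    (hQ : ∀ t, IntegrableOn (fun L => L * F L) (Ioo 0 t)) (t : ℝ) :
    (1 + k) * ∫ L in Ioo 0 t, L ^ 3 * F L = k * t ^ 2 * ∫ L in Ioo 0 t, L * F L := by
  have h := integral_mul_integral_div_sqrt (hP t)
  rw [setIntegral_congr_fun measurableSet_Ioo fun r hr => by rw [hint r hr.1, mul_left_comm],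
    integral_const_mul, integral_mul_integral_mul_sqrt (hQ t)] at h
  have hsplit : ∫ L in Ioo 0 t, L * F L * (t ^ 2 - L ^ 2) =
      t ^ 2 * (∫ L in Ioo 0 t, L * F L) - ∫ L in Ioo 0 t, L ^ 3 * F L := by
    rw [← integral_const_mul, ← integral_sub ((hQ t).const_mul _) (hP t)]
    congr 1; ext L
    ring
  rw [hsplit] at h
  refine mul_left_cancel₀ pi_ne_zero ?_
  linear_combination 2 * h.symm

lemma sq_mul_eq_integral (hint : AnisotropyIdentity k F) (hF : ContinuousOn F (Ioi 0))
    (hP : ∀ t, IntegrableOn (fun L => L ^ 3 * F L) (Ioo 0 t))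
    (hQ : ∀ t, IntegrableOn (fun L => L * F L) (Ioo 0 t)) {x : ℝ} (hx : 0 < x) :
    x ^ 2 * F x = 2 * k * ∫ L in Ioo 0 x, L * F L := by
  have hsq : HasDerivAt (fun u : ℝ => u ^ 2) (2 * x) x := by simpa using hasDerivAt_pow 2 x
  have h := eq_of_hasDerivAt_of_eqOn_Ioi (fun u _ => hint.moment_eq hP hQ u) hx
    ((hasDerivAt_integral_Ioo_zero (by fun_prop) (hP x) hx).const_mul (1 + k))
    ((hsq.const_mul k).mul (hasDerivAt_integral_Ioo_zero (by fun_prop) (hQ x) hx))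
  refine mul_left_cancel₀ hx.ne' ?_
  linear_combination h

lemma mul_deriv_eq (hint : AnisotropyIdentity k F) (hF : DifferentiableOn ℝ F (Ioi 0))
    (hP : ∀ t, IntegrableOn (fun L => L ^ 3 * F L) (Ioo 0 t))
    (hQ : ∀ t, IntegrableOn (fun L => L * F L) (Ioo 0 t)) {x : ℝ} (hx : 0 < x) :
    x * deriv F x = 2 * (k - 1) * F x := by
  have hFc : ContinuousOn F (Ioi 0) := hF.continuousOn
  have hsq : HasDerivAt (fun u : ℝ => u ^ 2) (2 * x) x := by simpa using hasDerivAt_pow 2 x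
  have h := eq_of_hasDerivAt_of_eqOn_Ioi
    (fun u hu => hint.sq_mul_eq_integral hFc hP hQ hu) hx
    (hsq.mul (hF.differentiableAt (Ioi_mem_nhds hx)).hasDerivAt)
    ((hasDerivAt_integral_Ioo_zero (by fun_prop) (hQ x) hx).const_mul (2 * k))
  refine mul_left_cancel₀ hx.ne' ?_
  linear_combination h

end AnisotropyIdentity

/-- If F is C¹ on (0,∞), L²F(L) → 0 as L → 0⁺, and for every Lₘ > 0 the integral
identity ∫₀^{Lₘ} L³F/√(Lₘ²−L²) = 2k ∫₀^{Lₘ} LF√(Lₘ²−L²) holds, then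
L F′(L) = 2(k−1)F(L) on (0,∞), hence F(L) = C·L^{2(k−1)} for some constant C. -/
theorem stmt_6 (k : ℝ) (F : ℝ → ℝ) (hF : ContDiffOn ℝ 1 F (Set.Ioi 0))
    (hlim : Filter.Tendsto (fun L => L ^ 2 * F L) (nhdsWithin 0 (Set.Ioi 0)) (nhds 0))
    (hint : ∀ Lm : ℝ, 0 < Lm →
      ∫ L in Set.Ioo 0 Lm, L ^ 3 * F L / Real.sqrt (Lm ^ 2 - L ^ 2) =
        2 * k * ∫ L in Set.Ioo 0 Lm, L * F L * Real.sqrt (Lm ^ 2 - L ^ 2)) :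
    (∀ L : ℝ, 0 < L → L * deriv F L = 2 * (k - 1) * F L) ∧
      ∃ C : ℝ, ∀ L : ℝ, 0 < L → F L = C * L ^ (2 * (k - 1)) := by
  have hFd : DifferentiableOn ℝ F (Ioi 0) := hF.differentiableOn one_ne_zero
  have hFc : ContinuousOn F (Ioi 0) := hFd.continuousOn
  have hP : ∀ t, IntegrableOn (fun L => L ^ 3 * F L) (Ioo 0 t) := by
    have hlim' : Tendsto (fun L => L * (L ^ 2 * F L)) (𝓝[>] 0) (𝓝 (0 * 0)) :=
      (tendsto_nhdsWithin_of_tendsto_nhds (continuous_id.tendsto 0)).mul hlim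
    exact integrableOn_Ioo_zero_of_tendsto (by fun_prop) (hlim'.congr fun L => by ring)
  have hint' : AnisotropyIdentity k F := hint
  have hQ := hint'.integrableOn_id_mul hFc hP
  have hODE : ∀ L : ℝ, 0 < L → L * deriv F L = 2 * (k - 1) * F L :=
    fun L hL => hint'.mul_deriv_eq hFd hP hQ hL
  exact ⟨hODE, F 1, fun L hL => eq_mul_rpow_of_mul_deriv_eq hFd hODE hL⟩
end

section
/- The function ξ(E) = (3/(4 m⁴ π³ G φ₀² a))·(2E/m − 1)(E/m − 1)², for m, G, φ₀, a > 0, satisfies ∫_{m√A}^{m} E² ξ(E) dE = A^{3/2}(1−√A)³/(4π³ m G φ₀² a) for every A ∈ (0,1]. -/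
/-!
With `t = E / m`, the integrand `E² ξ(E)` is `c E² (2t - 1)(t - 1)²`, and this is the derivative of
`c E³ (t - 1)³ / 3`. The antiderivative vanishes at `E = m`, so the integral from `m √A` to `m` is
`c m³ A^{3/2} (1 - √A)³ / 3`; this differentiation is valid for every `m`, including the junk
value `E / 0 = 0`.
-/

open Real

theorem hasDerivAt_cube_mul_cube_sub (c m E : ℝ) :
    HasDerivAt (fun x => c * x ^ 3 * (x / m - 1) ^ 3 / 3)
      (E ^ 2 * (c * (2 * E / m - 1) * (E / m - 1) ^ 2)) E := by
  refine ((((hasDerivAt_pow 3 E).const_mul c).fun_mul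
    (((hasDerivAt_id' E).div_const m).sub_const 1 |>.fun_pow 3)).div_const 3).congr_deriv ?_
  push_cast
  ring

theorem integral_sq_mul_two_mul_sub_one_mul_sub_one_sq (c m s : ℝ) :
    ∫ E in (m * s)..m, E ^ 2 * (c * (2 * E / m - 1) * (E / m - 1) ^ 2) =
      c * m ^ 3 * s ^ 3 * (1 - s) ^ 3 / 3 := by
  rw [intervalIntegral.integral_eq_sub_of_hasDerivAt
    (fun E _ => hasDerivAt_cube_mul_cube_sub c m E)
    ((by fun_prop : Continuous _).intervalIntegrable _ _)]
  rcases eq_or_ne m 0 with rfl | hm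
  · simp
  · field_simp
    ring

theorem stmt_9_general (m G φ₀ a : ℝ)
    (ξ : ℝ → ℝ)
    (hξ : ∀ E : ℝ, ξ E = 3 / (4 * m ^ 4 * π ^ 3 * G * φ₀ ^ 2 * a) *
      (2 * E / m - 1) * (E / m - 1) ^ 2) :
    ∀ A : ℝ, 0 < A → A ≤ 1 →
      ∫ E in (m * Real.sqrt A)..m, E ^ 2 * ξ E =
        A ^ ((3 : ℝ) / 2) * (1 - Real.sqrt A) ^ 3 / (4 * π ^ 3 * m * G * φ₀ ^ 2 * a) := by
  intro A hA _
  simp_rw [hξ, integral_sq_mul_two_mul_sub_one_mul_sub_one_sq,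
    rpow_div_two_eq_sqrt 3 hA.le, rpow_ofNat]
  rcases eq_or_ne m 0 with rfl | hm
  · simp
  · field_simp

/-- The Hernquist energy distribution ξ satisfies the tt self-gravitation
equation: ∫_{m√A}^m E²ξ(E) dE = A^{3/2}(1−√A)³/(4π³mGφ₀²a) for A ∈ (0,1]. -/
theorem stmt_9 (m G φ₀ a : ℝ) (hm : 0 < m) (hG : 0 < G) (hφ : 0 < φ₀) (ha : 0 < a)
    (ξ : ℝ → ℝ)
    (hξ : ∀ E : ℝ, ξ E = 3 / (4 * m ^ 4 * π ^ 3 * G * φ₀ ^ 2 * a) *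
      (2 * E / m - 1) * (E / m - 1) ^ 2) :
    ∀ A : ℝ, 0 < A → A ≤ 1 →
      ∫ E in (m * Real.sqrt A)..m, E ^ 2 * ξ E =
        A ^ ((3 : ℝ) / 2) * (1 - Real.sqrt A) ^ 3 / (4 * π ^ 3 * m * G * φ₀ ^ 2 * a) :=
  stmt_9_general m G φ₀ a ξ hξ
end

section
/- With ξ(E) = (3/(4 m⁴ π³ G φ₀² a))·(2E/m − 1)(E/m − 1)², for every A ∈ (0,1] one has ∫_{m√A}^{m} ξ(E)(E² − m²A) dE = A(1−√A)⁴/(8π³ m G φ₀² a). -/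
open Real

/-- Consistency check: the Hernquist ξ satisfies the rr self-gravitation
equation ∫_{m√A}^m ξ(E)(E² − m²A) dE = A(1−√A)⁴/(8π³mGφ₀²a) for A ∈ (0,1]. -/
theorem stmt_10 (m G φ₀ a : ℝ) (hm : 0 < m) (hG : 0 < G) (hφ : 0 < φ₀) (ha : 0 < a)
    (ξ : ℝ → ℝ)
    (hξ : ∀ E : ℝ, ξ E = 3 / (4 * m ^ 4 * π ^ 3 * G * φ₀ ^ 2 * a) *
      (2 * E / m - 1) * (E / m - 1) ^ 2) :
    ∀ A : ℝ, 0 < A → A ≤ 1 →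
      ∫ E in (m * Real.sqrt A)..m, ξ E * (E ^ 2 - m ^ 2 * A) =
        A * (1 - Real.sqrt A) ^ 4 / (8 * π ^ 3 * m * G * φ₀ ^ 2 * a) := by
  intro A hA hA1
  have hm' : (m : ℝ) ≠ 0 := hm.ne'
  have hπ : (π : ℝ) ≠ 0 := Real.pi_ne_zero
  have hG' : G ≠ 0 := hG.ne'
  have hφ' : φ₀ ≠ 0 := hφ.ne'
  have ha' : a ≠ 0 := ha.ne'
  set s := Real.sqrt A with hsdef
  have hs2 : s ^ 2 = A := Real.sq_sqrt hA.le
  set K := 3 / (4 * m ^ 4 * π ^ 3 * G * φ₀ ^ 2 * a) with hK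
  set F : ℝ → ℝ := fun E => K * (E ^ 6 / (3 * m ^ 3) - E ^ 5 / m ^ 2
      + (4 - 2 * s ^ 2) * E ^ 4 / (4 * m) + (5 * s ^ 2 - 1) * E ^ 3 / 3
      - 2 * s ^ 2 * E ^ 2 * m + s ^ 2 * E * m ^ 2) with hF
  have hderiv : ∀ E ∈ Set.uIcc (m * s) m,
      HasDerivAt F (ξ E * (E ^ 2 - m ^ 2 * A)) E := by
    intro E _
    have h1 : HasDerivAt (fun E : ℝ => E ^ 6 / (3 * m ^ 3) - E ^ 5 / m ^ 2
        + (4 - 2 * s ^ 2) * E ^ 4 / (4 * m) + (5 * s ^ 2 - 1) * E ^ 3 / 3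
        - 2 * s ^ 2 * E ^ 2 * m + s ^ 2 * E * m ^ 2)
        ((6 : ℕ) * E ^ 5 / (3 * m ^ 3) - (5 : ℕ) * E ^ 4 / m ^ 2
        + (4 - 2 * s ^ 2) * ((4 : ℕ) * E ^ 3) / (4 * m)
        + (5 * s ^ 2 - 1) * ((3 : ℕ) * E ^ 2) / 3
        - 2 * s ^ 2 * ((2 : ℕ) * E ^ 1) * m + s ^ 2 * 1 * m ^ 2) E := by
      exact ((((((hasDerivAt_pow 6 E).div_const (3 * m ^ 3)).sub
        ((hasDerivAt_pow 5 E).div_const (m ^ 2))).add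
        (((hasDerivAt_pow 4 E).const_mul (4 - 2 * s ^ 2)).div_const (4 * m))).add
        (((hasDerivAt_pow 3 E).const_mul (5 * s ^ 2 - 1)).div_const 3)).sub
        (((hasDerivAt_pow 2 E).const_mul (2 * s ^ 2)).mul_const m)).add
        (((hasDerivAt_id E).const_mul (s ^ 2)).mul_const (m ^ 2)) |>.congr_deriv (by push_cast; ring)
    have h2 := h1.const_mul K
    have : ξ E * (E ^ 2 - m ^ 2 * A) = K * ((6 : ℕ) * E ^ 5 / (3 * m ^ 3)
        - (5 : ℕ) * E ^ 4 / m ^ 2 + (4 - 2 * s ^ 2) * ((4 : ℕ) * E ^ 3) / (4 * m)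
        + (5 * s ^ 2 - 1) * ((3 : ℕ) * E ^ 2) / 3
        - 2 * s ^ 2 * ((2 : ℕ) * E ^ 1) * m + s ^ 2 * 1 * m ^ 2) := by
      rw [hξ, ← hs2, hK]
      push_cast
      field_simp
      ring
    rw [this]
    exact h2
  have hint : IntervalIntegrable (fun E => ξ E * (E ^ 2 - m ^ 2 * A))
      MeasureTheory.volume (m * s) m := by
    apply Continuous.intervalIntegrable
    have : Continuous ξ := by
      have : ξ = fun E : ℝ => 3 / (4 * m ^ 4 * π ^ 3 * G * φ₀ ^ 2 * a) *
          (2 * E / m - 1) * (E / m - 1) ^ 2 := funext hξ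
      rw [this]; fun_prop
    fun_prop
  rw [intervalIntegral.integral_eq_sub_of_hasDerivAt hderiv hint]
  rw [hF, hK, ← hs2]
  field_simp
  ring
end

section
/- Let n be a positive odd integer and define ξ(ε) = Σ_{k=1}^{2n+2} a_k ε^{k−1} with a_k = C(2n+2, k)·(−1)^{k+(n−1)/2}·(k+n+1)!!·k/(k!!·(n+1)!!) (up to an overall positive constant independent of k). Then for every x ∈ (0,1], ∫_x^1 ξ(ε)(ε² − x²)^{(n+1)/2} dε = c·x^{n+1}(1−x)^{2n+2} for an appropriate positive constant c. -/
/-!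
Write m = (n + 1) / 2 and N = 2n + 2 = 4m. Integrating by parts m times against d(ε^k) gives an
explicit antiderivative F_{m,k} of ε ↦ ((k + 2m)‼ / k‼) k ε^(k-1) (ε² - x²)^m, with
F_{m,k}(x) = (-2)^m m! x^(k+2m) and F_{m,k}(1) a polynomial of degree ≤ m in k. Weighting by
(-1)^k C(N, k) and summing over k, the values at 1 form an N-th finite difference of a polynomial
of degree < N, hence vanish, while the values at x sum by the binomial theorem to
(-2)^m m! x^(2m) (1 - x)^N.
-/

open Nat Finset Polynomial

theorem Polynomial.sum_range_neg_one_pow_mul_choose_mul_eval_eq_zero {R : Type*} [CommRing R]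
    {P : R[X]} {N : ℕ} (hP : P.natDegree < N) :
    ∑ k ∈ range (N + 1), (-1 : R) ^ k * N.choose k * P.eval (k : R) = 0 := by
  have h := congr_fun (fwdDiff_iter_eq_zero_of_degree_lt hP) 0
  rw [fwdDiff_iter_eq_sum_shift, Pi.zero_apply] at h
  rw [← mul_zero ((-1 : R) ^ N), ← h, mul_sum]
  refine sum_congr rfl fun k hk => ?_
  obtain ⟨j, rfl⟩ := Nat.exists_eq_add_of_le (mem_range_succ_iff.mp hk)
  have hj : (-1 : R) ^ j * (-1) ^ j = 1 := by rw [← pow_add, ← two_mul, pow_mul]; norm_num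
  simp only [Nat.add_sub_cancel_left, zero_add, nsmul_one, zsmul_eq_mul]
  push_cast
  linear_combination -(-1 : R) ^ k * (k + j).choose k * P.eval (k : R) * hj

namespace Hypervirial

noncomputable def doubleFactorialRatio (m : ℕ) : ℝ[X] :=
  ∏ i ∈ range m, (X + C (2 * i + 2 : ℝ))

lemma eval_doubleFactorialRatio_succ (m : ℕ) (t : ℝ) :
    (doubleFactorialRatio (m + 1)).eval t = (t + 2) * (doubleFactorialRatio m).eval (t + 2) := by
  simp only [doubleFactorialRatio, prod_range_succ', eval_mul, eval_prod, eval_add, eval_X, eval_C]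
  push_cast
  rw [mul_comm]
  congr 1
  · ring
  · exact prod_congr rfl fun i _ => by ring

lemma natDegree_doubleFactorialRatio_le (m : ℕ) : (doubleFactorialRatio m).natDegree ≤ m := by
  refine (natDegree_prod_le _ _).trans ?_
  simp only [natDegree_X_add_C, sum_const, card_range, smul_eq_mul, mul_one, le_refl]

lemma doubleFactorial_add_two_mul (k m : ℕ) :
    ((k + 2 * m)‼ : ℝ) = k‼ * (doubleFactorialRatio m).eval (k : ℝ) := by
  induction m generalizing k with
  | zero => simp [doubleFactorialRatio]
  | succ m ih =>
    rw [eval_doubleFactorialRatio_succ, show k + 2 * (m + 1) = k + 2 + 2 * m by ring, ih,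
      doubleFactorial_add_two]
    push_cast
    ring

-- One integration by parts against d(ε^k) lowers the power of ε² - x² by one.
noncomputable def antideriv (x : ℝ) : ℕ → ℕ → ℝ → ℝ
  | 0, k, ε => ε ^ k
  | m + 1, k, ε =>
    (doubleFactorialRatio (m + 1)).eval (k : ℝ) * (ε ^ 2 - x ^ 2) ^ (m + 1) * ε ^ k
      - 2 * ((m : ℝ) + 1) * antideriv x m (k + 2) ε

lemma hasDerivAt_antideriv (x : ℝ) (m k : ℕ) (ε : ℝ) :
    HasDerivAt (antideriv x m k)
      ((doubleFactorialRatio m).eval (k : ℝ) * k * ε ^ (k - 1) * (ε ^ 2 - x ^ 2) ^ m) ε := by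
  induction m generalizing k with
  | zero => simpa [antideriv, doubleFactorialRatio, mul_comm] using hasDerivAt_pow k ε
  | succ m ih =>
    have hsq : HasDerivAt (fun ε => (ε ^ 2 - x ^ 2) ^ (m + 1))
        ((m + 1 : ℕ) * (ε ^ 2 - x ^ 2) ^ m * (2 * ε)) ε := by
      simpa using ((hasDerivAt_pow 2 ε).sub_const (x ^ 2)).fun_pow (m + 1)
    have h := ((hsq.fun_mul (hasDerivAt_pow k ε)).const_mul
      ((doubleFactorialRatio (m + 1)).eval (k : ℝ))).fun_sub
      ((ih (k + 2)).const_mul (2 * ((m : ℝ) + 1)))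
    simp only [← mul_assoc] at h
    refine h.congr_deriv ?_
    rw [eval_doubleFactorialRatio_succ, show k + 2 - 1 = k + 1 by omega]
    push_cast
    ring

lemma antideriv_self (x : ℝ) (m k : ℕ) :
    antideriv x m k x = (-2) ^ m * m ! * x ^ (k + 2 * m) := by
  induction m generalizing k with
  | zero => simp [antideriv]
  | succ m ih =>
    simp only [antideriv, sub_self, ne_eq, add_eq_zero, one_ne_zero, and_false,
      not_false_eq_true, zero_pow, mul_zero, zero_mul, zero_sub, ih, factorial_succ]
    push_cast
    ring

lemma exists_natDegree_le_antideriv_one (x : ℝ) (m : ℕ) :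
    ∃ p : ℝ[X], p.natDegree ≤ m ∧ ∀ k : ℕ, antideriv x m k 1 = p.eval (k : ℝ) := by
  induction m with
  | zero => exact ⟨1, by simp, fun k => by simp [antideriv]⟩
  | succ m ih =>
    obtain ⟨p, hp, hpk⟩ := ih
    refine ⟨C ((1 - x ^ 2) ^ (m + 1)) * doubleFactorialRatio (m + 1)
      - C (2 * ((m : ℝ) + 1)) * p.comp (X + C 2), ?_, fun k => ?_⟩
    · refine (natDegree_sub_le_of_le ((natDegree_C_mul_le _ _).trans
        (natDegree_doubleFactorialRatio_le _)) ((natDegree_C_mul_le _ _).trans ?_)).trans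
        (max_self _).le
      rw [natDegree_comp, natDegree_X_add_C, mul_one]
      omega
    · simp only [antideriv, hpk, eval_sub, eval_mul, eval_C, eval_comp, eval_add, eval_X,
        one_pow, mul_one]
      push_cast
      ring

theorem integral_alternatingSum_mul_sq_sub_sq_pow (x : ℝ) {m N : ℕ} (hmN : m < N) :
    ∫ ε in x..1, (∑ k ∈ range (N + 1), (-1) ^ k * N.choose k
        * (doubleFactorialRatio m).eval (k : ℝ) * k * ε ^ (k - 1)) * (ε ^ 2 - x ^ 2) ^ m
      = -((-2) ^ m * m ! * x ^ (2 * m) * (1 - x) ^ N) := by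
  set Φ : ℝ → ℝ := fun ε =>
    ∑ k ∈ range (N + 1), (-1) ^ k * N.choose k * antideriv x m k ε
  have hderiv : ∀ ε, HasDerivAt Φ ((∑ k ∈ range (N + 1), (-1) ^ k * N.choose k
      * (doubleFactorialRatio m).eval (k : ℝ) * k * ε ^ (k - 1)) * (ε ^ 2 - x ^ 2) ^ m) ε := by
    intro ε
    refine (HasDerivAt.fun_sum fun k _ => (hasDerivAt_antideriv x m k ε).const_mul
      ((-1) ^ k * N.choose k : ℝ)).congr_deriv ?_
    rw [sum_mul]
    exact sum_congr rfl fun k _ => by ring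
  have hΦ1 : Φ 1 = 0 := by
    obtain ⟨p, hp, hpk⟩ := exists_natDegree_le_antideriv_one x m
    simp only [Φ, hpk]
    exact sum_range_neg_one_pow_mul_choose_mul_eval_eq_zero (hp.trans_lt hmN)
  have hΦx : Φ x = (-2) ^ m * m ! * x ^ (2 * m) * (1 - x) ^ N := by
    simp only [Φ, antideriv_self, sub_eq_neg_add, add_pow, one_pow, mul_one, mul_sum]
    exact sum_congr rfl fun k _ => by ring
  rw [intervalIntegral.integral_eq_sub_of_hasDerivAt (fun ε _ => hderiv ε)
    (Continuous.intervalIntegrable (by fun_prop) _ _), hΦ1, hΦx, zero_sub]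

theorem integral_xi_mul_sq_sub_sq_pow (x c : ℝ) (r : ℕ) {m N : ℕ} (hmN : m < N) :
    ∫ ε in x..1, (∑ k ∈ Icc 1 N, c * (N.choose k : ℝ) * (-1) ^ (k + r)
        * ((k + 2 * m)‼ : ℝ) * k / (k‼ * (2 * m)‼) * ε ^ (k - 1)) * (ε ^ 2 - x ^ 2) ^ m
      = (-1) ^ (r + m + 1) * c * x ^ (2 * m) * (1 - x) ^ N := by
  have hintegrand : ∀ ε : ℝ, (∑ k ∈ Icc 1 N, c * (N.choose k : ℝ) * (-1) ^ (k + r)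
      * ((k + 2 * m)‼ : ℝ) * k / (k‼ * (2 * m)‼) * ε ^ (k - 1)) * (ε ^ 2 - x ^ 2) ^ m
      = c * (-1) ^ r / (2 * m)‼ * ((∑ k ∈ range (N + 1), (-1) ^ k * N.choose k
        * (doubleFactorialRatio m).eval (k : ℝ) * k * ε ^ (k - 1)) * (ε ^ 2 - x ^ 2) ^ m) := by
    intro ε
    rw [← mul_assoc, mul_sum, sum_subset (fun k hk => mem_range_succ_iff.mpr (mem_Icc.mp hk).2)
      fun k _ hk => by simp [show k = 0 by simp_all]]
    congr 1
    refine sum_congr rfl fun k _ => ?_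
    have : (k‼ : ℝ) ≠ 0 := by positivity
    rw [doubleFactorial_add_two_mul]
    field_simp
    ring
  rw [intervalIntegral.integral_congr fun ε _ => hintegrand ε,
    intervalIntegral.integral_const_mul, integral_alternatingSum_mul_sq_sub_sq_pow x hmN,
    doubleFactorial_two_mul, neg_pow (2 : ℝ)]
  push_cast
  field_simp
  ring

end Hypervirial

open Hypervirial

/-- For odd n, the polynomial ξ(ε) = Σ_{k=1}^{2n+2} a_k ε^{k−1}, with
a_k = C(2n+2,k)·(−1)^{k+(n−1)/2}·(k+n+1)‼·k/(k‼·(n+1)‼) up to a common positive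
constant c₀, satisfies ∫_x^1 ξ(ε)(ε²−x²)^{(n+1)/2} dε = c·x^{n+1}(1−x)^{2n+2}
for an appropriate constant c > 0. -/
theorem stmt_15 (n : ℕ) (hn : Odd n) (c₀ : ℝ) (hc₀ : 0 < c₀) :
    ∃ c : ℝ, 0 < c ∧ ∀ x : ℝ, 0 < x → x ≤ 1 →
      ∫ ε in x..(1 : ℝ),
          (∑ k ∈ Finset.Icc 1 (2 * n + 2),
            c₀ * (Nat.choose (2 * n + 2) k : ℝ) * (-1 : ℝ) ^ (k + (n - 1) / 2) *
              (Nat.doubleFactorial (k + n + 1) : ℝ) * (k : ℝ) /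
              ((Nat.doubleFactorial k : ℝ) * (Nat.doubleFactorial (n + 1) : ℝ)) *
              ε ^ (k - 1)) *
          (ε ^ 2 - x ^ 2) ^ ((n + 1) / 2)
        = c * x ^ (n + 1) * (1 - x) ^ (2 * n + 2) := by
  obtain ⟨r, rfl⟩ := hn
  refine ⟨c₀, hc₀, fun x _ _ => ?_⟩
  set m := r + 1
  simp only [show 2 * (2 * r + 1) + 2 = 4 * m by omega, show (2 * r + 1 - 1) / 2 = r by omega,
    show 2 * r + 1 + 1 = 2 * m by omega, show 2 * m / 2 = m by omega,
    show ∀ k, k + (2 * r + 1) + 1 = k + 2 * m from fun k => by omega]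
  rw [integral_xi_mul_sq_sub_sq_pow x c₀ r (by omega), Even.neg_one_pow ⟨m, by omega⟩,
    one_mul]
end
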